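/- Any set S ⊆ F_2^n of the form S = ⋃_{i=1}^b T_i, where each T_i is a finite symmetric difference of (n-k+1)-flats (k ≥ 2), is a [k,1]-avoider. -/
import Mathlib


/-- A `k`-flat in `𝔽₂ⁿ`: a coset of a `k`-dimensional linear subspace. -/
def IsFlat {n : ℕ} (k : ℕ) (F : Set (Fin n → ZMod 2)) : Prop :=
  ∃ (W : Submodule (ZMod 2) (Fin n → ZMod 2)) (v : Fin n → ZMod 2),
    Module.finrank (ZMod 2) W = k ∧ F = {x | x - v ∈ W}

/-- The symmetric difference of a finite family of sets: points lying in an odd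
number of the sets. -/
def symmDiffFam {n a : ℕ} (S : Fin a → Set (Fin n → ZMod 2)) : Set (Fin n → ZMod 2) :=
  {x | Odd {i : Fin a | x ∈ S i}.ncard}

lemma even_pow' {d : ℕ} (hd : d ≠ 0) : Even (2 ^ d) := by
  rcases Nat.exists_eq_succ_of_ne_zero hd with ⟨e, rfl⟩
  exact ⟨2 ^ e, by rw [pow_succ]; ring⟩

open Module in
/-- A flat of dimension `n - k + 1` meets a `k`-flat in an even number of points. -/
lemma flat_inter_even {n k : ℕ} (hkn : k ≤ n) {F G : Set (Fin n → ZMod 2)}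
    (hF : IsFlat k F) (hG : IsFlat (n - k + 1) G) : Even ((G ∩ F).ncard) := by
  classical
  obtain ⟨W, v, hWrank, rfl⟩ := hF
  obtain ⟨U, u, hUrank, rfl⟩ := hG
  set A : Set (Fin n → ZMod 2) := {x | x - u ∈ U} ∩ {x | x - v ∈ W}
  rcases A.eq_empty_or_nonempty with h | ⟨c, hc⟩
  · simp [h]
  · have hcU : c - u ∈ U := hc.1
    have hcW : c - v ∈ W := hc.2
    have hA : A = (· + c) '' ((U ⊓ W : Submodule (ZMod 2) (Fin n → ZMod 2)) : Set _) := by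
      ext x
      constructor
      · rintro ⟨hxU, hxW⟩
        refine ⟨x - c, ⟨?_, ?_⟩, by simp⟩
        · have := U.sub_mem hxU hcU
          simpa [sub_sub_sub_cancel_right] using this
        · have := W.sub_mem hxW hcW
          simpa [sub_sub_sub_cancel_right] using this
      · rintro ⟨y, ⟨hyU, hyW⟩, rfl⟩
        constructor
        · have := U.add_mem hyU hcU
          simpa [add_sub_assoc] using this
        · have := W.add_mem hyW hcW
          simpa [add_sub_assoc] using this
    have hinj : Function.Injective (· + c : (Fin n → ZMod 2) → (Fin n → ZMod 2)) :=
      add_left_injective c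
    rw [hA, Set.ncard_image_of_injective _ hinj]
    -- the intersection subspace has positive rank
    have htot : finrank (ZMod 2) (Fin n → ZMod 2) = n := by
      simp [Module.finrank_fintype_fun_eq_card]
    have hsup : finrank (ZMod 2) ↥(U ⊔ W) ≤ n := by
      have := Submodule.finrank_le (U ⊔ W)
      omega
    have hdim : 1 ≤ finrank (ZMod 2) ↥(U ⊓ W) := by
      have := Submodule.finrank_sup_add_finrank_inf_eq U W
      omega
    have hcard : Nat.card ↥(U ⊓ W) = 2 ^ finrank (ZMod 2) ↥(U ⊓ W) := by
      have : Fintype.card ↥(U ⊓ W) =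
          Fintype.card (ZMod 2) ^ finrank (ZMod 2) ↥(U ⊓ W) := card_eq_pow_finrank
      simpa [Nat.card_eq_fintype_card, ZMod.card] using this
    have : (↑(U ⊓ W) : Set (Fin n → ZMod 2)).ncard = 2 ^ finrank (ZMod 2) ↥(U ⊓ W) := by
      rw [← hcard]
      exact (Nat.card_coe_set_eq _).symm
    rw [this]
    exact even_pow' (by omega)

lemma ncard_cast_sum {α : Type*} [Fintype α] [DecidableEq α] (s : Set α)
    [DecidablePred (· ∈ s)] :
    ((s.ncard : ZMod 2)) = ∑ x : α, if x ∈ s then (1 : ZMod 2) else 0 := by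
  classical
  rw [Finset.sum_boole]
  congr 1
  rw [Set.ncard_eq_toFinset_card']
  congr 1
  ext x
  simp

lemma cast_eq_ite (m : ℕ) : ((m : ZMod 2)) = if Odd m then 1 else 0 := by
  rcases Nat.even_or_odd m with h | h
  · obtain ⟨r, rfl⟩ := h
    rw [if_neg (by simpa using (Nat.not_odd_iff_even.mpr ⟨r, rfl⟩)), ← two_mul]
    rw [Nat.cast_mul, ZMod.natCast_self, zero_mul]
  · obtain ⟨r, rfl⟩ := h
    rw [if_pos ⟨r, rfl⟩]
    push_cast
    have h2 : (2 : ZMod 2) = 0 := by decide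
    rw [h2, zero_mul, zero_add]

/-- A symmetric difference of flats of dimension `n - k + 1` meets a `k`-flat
evenly. -/
lemma symmDiff_inter_even {n k a : ℕ} (hkn : k ≤ n) {F : Set (Fin n → ZMod 2)}
    (hF : IsFlat k F) (S : Fin a → Set (Fin n → ZMod 2))
    (hS : ∀ j, IsFlat (n - k + 1) (S j)) : Even ((symmDiffFam S ∩ F).ncard) := by
  classical
  have key : (((symmDiffFam S ∩ F).ncard : ZMod 2)) = 0 := by
    rw [ncard_cast_sum]
    have hx : ∀ x : Fin n → ZMod 2, (if x ∈ symmDiffFam S ∩ F then (1 : ZMod 2) else 0)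
        = ∑ j : Fin a, (if x ∈ S j ∩ F then (1 : ZMod 2) else 0) := by
      intro x
      by_cases hxF : x ∈ F
      · have h1 : (if x ∈ symmDiffFam S ∩ F then (1 : ZMod 2) else 0)
            = if Odd {i : Fin a | x ∈ S i}.ncard then 1 else 0 := by
          simp [symmDiffFam, Set.mem_inter_iff, hxF]
        rw [h1, ← cast_eq_ite, ncard_cast_sum]
        refine Finset.sum_congr rfl fun j _ => ?_
        simp [Set.mem_inter_iff, hxF]
      · simp [Set.mem_inter_iff, hxF]
    rw [Finset.sum_congr rfl fun x _ => hx x, Finset.sum_comm]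
    refine Finset.sum_eq_zero fun j _ => ?_
    rw [← ncard_cast_sum, cast_eq_ite,
      if_neg (Nat.not_odd_iff_even.mpr (flat_inter_even hkn hF (hS j)))]
  rw [cast_eq_ite] at key
  by_contra h
  rw [Nat.not_even_iff_odd] at h
  rw [if_pos h] at key
  exact one_ne_zero key

/-- For `k ≥ 2`, `n ≥ k`, a union `⋃_{i=1}^b T_i` where each `T_i` is a finite
symmetric difference of `(n-k+1)`-flats is a `[k,1]`-avoider. -/
theorem union_of_symmDiffs_avoider {n k b : ℕ} (hk : 2 ≤ k) (hkn : k ≤ n)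
    (T : Fin b → Set (Fin n → ZMod 2))
    (hT : ∀ i, ∃ (a : ℕ) (S : Fin a → Set (Fin n → ZMod 2)),
      (∀ j, IsFlat (n - k + 1) (S j)) ∧ T i = symmDiffFam S) :
    ∀ F, IsFlat k F → ((⋃ i, T i) ∩ F).ncard ≠ 1 := by
  intro F hF h1
  have hfin : ((⋃ i, T i) ∩ F).Finite := Set.toFinite _
  obtain ⟨x, hx⟩ := (Set.ncard_eq_one).mp h1
  have hxmem : x ∈ (⋃ i, T i) ∩ F := by rw [hx]; exact rfl
  obtain ⟨hxU, hxF⟩ := hxmem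
  obtain ⟨s, ⟨i, rfl⟩, hxT⟩ := hxU
  obtain ⟨a, S, hSflat, hTi⟩ := hT i
  have hsub : T i ∩ F ⊆ {x} := by
    rw [← hx]
    exact Set.inter_subset_inter_left _ (Set.subset_iUnion T i)
  have heq : T i ∩ F = {x} := by
    apply Set.Subset.antisymm hsub
    intro y hy
    rw [Set.mem_singleton_iff] at hy
    subst hy
    exact ⟨hxT, hxF⟩
  have hev : Even ((T i ∩ F).ncard) := by
    rw [hTi]
    exact symmDiff_inter_even hkn hF S hSflat
  rw [heq, Set.ncard_singleton] at hev
  exact (Nat.not_even_one) hev
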